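/- Fix integers ℓ ≥ 1, m ≥ 1 and set n = 2^ℓ·m, and fix a level ℓ' ∈ {0,…,ℓ−1}. Let H̃, Ĥ be n×n real matrices, p ≥ 0, ε ≥ 0, u* ≥ 0, and let ξ_k ≥ 0, u_k ∈ [0, u*] for k = ℓ'+1,…,ℓ. Assume: (a) for every level k ∈ {ℓ'+1,…,ℓ}, every sibling off-diagonal block satisfies ‖H̃_{ij}^{(k)}‖_F ≤ ξ_k ‖H̃‖_F and ‖H̃_{ij}^{(k)} − Ĥ_{ij}^{(k)}‖_F ≤ (2 + √p·u_k)·u_k·‖H̃_{ij}^{(k)}‖_F; (b) Ĥ_{ii}^{(ℓ)} = H̃_{ii}^{(ℓ)} for all i; (c) 2^{(k−ℓ')/2}·ξ_k·u_k ≤ ε for every k ∈ {ℓ'+1,…,ℓ}. Then every diagonal block at level ℓ' satisfies ‖H̃_{ii}^{(ℓ')} − Ĥ_{ii}^{(ℓ')}‖_F ≤ (2 + √p·u*)·√(2(ℓ−ℓ'))·ε·‖H̃‖_F for all i ∈ {1,…,2^{ℓ'}}. -/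
import Mathlib


/-- Frobenius norm of a real matrix: `‖M‖_F = (Σ_{i,j} m_{ij}²)^{1/2}`. -/
noncomputable def frob {α β : Type*} [Fintype α] [Fintype β] (A : Matrix α β ℝ) : ℝ :=
  Real.sqrt (∑ i, ∑ j, (A i j) ^ 2)

/-- For an `n × n` matrix with `n = 2^ℓ·m`, the level-`k` block `M_{ij}^{(k)}`
(0-based block indices `i, j`): the square submatrix of size `2^(ℓ-k)·m` whose
rows are `{i·2^(ℓ-k)·m, …, (i+1)·2^(ℓ-k)·m − 1}` and whose columns are
`{j·2^(ℓ-k)·m, …, (j+1)·2^(ℓ-k)·m − 1}` (and `0` outside the index range, which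
never occurs for valid block indices `i, j < 2^k`). -/
def blk (ℓ m : ℕ) (M : Matrix (Fin (2 ^ ℓ * m)) (Fin (2 ^ ℓ * m)) ℝ) (k i j : ℕ) :
    Matrix (Fin (2 ^ (ℓ - k) * m)) (Fin (2 ^ (ℓ - k) * m)) ℝ :=
  Matrix.of fun a b =>
    if h : i * (2 ^ (ℓ - k) * m) + a.val < 2 ^ ℓ * m ∧
           j * (2 ^ (ℓ - k) * m) + b.val < 2 ^ ℓ * m then
      M ⟨i * (2 ^ (ℓ - k) * m) + a.val, h.1⟩ ⟨j * (2 ^ (ℓ - k) * m) + b.val, h.2⟩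
    else 0

namespace HodlrAux

open Finset

/-- Squared Frobenius norm. -/
noncomputable def frobSq {α β : Type*} [Fintype α] [Fintype β] (A : Matrix α β ℝ) : ℝ :=
  ∑ i, ∑ j, (A i j) ^ 2

lemma frobSq_nonneg {α β : Type*} [Fintype α] [Fintype β] (A : Matrix α β ℝ) :
    0 ≤ frobSq A :=
  Finset.sum_nonneg fun _ _ => Finset.sum_nonneg fun _ _ => sq_nonneg _

lemma frob_eq_sqrt {α β : Type*} [Fintype α] [Fintype β] (A : Matrix α β ℝ) :
    frob A = Real.sqrt (frobSq A) := rfl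

lemma frob_nonneg {α β : Type*} [Fintype α] [Fintype β] (A : Matrix α β ℝ) :
    0 ≤ frob A := Real.sqrt_nonneg _

lemma sq_frob {α β : Type*} [Fintype α] [Fintype β] (A : Matrix α β ℝ) :
    frob A ^ 2 = frobSq A := Real.sq_sqrt (frobSq_nonneg A)

lemma frobSq_zero {α β : Type*} [Fintype α] [Fintype β] :
    frobSq (0 : Matrix α β ℝ) = 0 := by
  simp [frobSq]

/-- Entry extraction helper. -/
noncomputable def v (ℓ m : ℕ) (M : Matrix (Fin (2 ^ ℓ * m)) (Fin (2 ^ ℓ * m)) ℝ)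
    (r c : ℕ) : ℝ :=
  if h : r < 2 ^ ℓ * m ∧ c < 2 ^ ℓ * m then M ⟨r, h.1⟩ ⟨c, h.2⟩ else 0

lemma frobSq_blk (ℓ m : ℕ) (M : Matrix (Fin (2 ^ ℓ * m)) (Fin (2 ^ ℓ * m)) ℝ)
    (k i j : ℕ) :
    frobSq (blk ℓ m M k i j) =
      ∑ a ∈ range (2 ^ (ℓ - k) * m), ∑ b ∈ range (2 ^ (ℓ - k) * m),
        (v ℓ m M (i * (2 ^ (ℓ - k) * m) + a) (j * (2 ^ (ℓ - k) * m) + b)) ^ 2 := by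
  show (∑ a : Fin (2 ^ (ℓ - k) * m), ∑ b : Fin (2 ^ (ℓ - k) * m),
      (v ℓ m M (i * (2 ^ (ℓ - k) * m) + a.val) (j * (2 ^ (ℓ - k) * m) + b.val)) ^ 2) = _
  rw [Fin.sum_univ_eq_sum_range (fun a => ∑ b : Fin (2 ^ (ℓ - k) * m),
      (v ℓ m M (i * (2 ^ (ℓ - k) * m) + a) (j * (2 ^ (ℓ - k) * m) + b.val)) ^ 2)]
  exact Finset.sum_congr rfl fun a _ => Fin.sum_univ_eq_sum_range
    (fun b => (v ℓ m M (i * (2 ^ (ℓ - k) * m) + a) (j * (2 ^ (ℓ - k) * m) + b)) ^ 2) _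

lemma split4 (N : ℕ) (g : ℕ → ℕ → ℝ) :
    ∑ a ∈ range (N + N), ∑ b ∈ range (N + N), g a b
      = ((∑ a ∈ range N, ∑ b ∈ range N, g a b)
        + ∑ a ∈ range N, ∑ b ∈ range N, g a (N + b))
        + ((∑ a ∈ range N, ∑ b ∈ range N, g (N + a) b)
        + ∑ a ∈ range N, ∑ b ∈ range N, g (N + a) (N + b)) := by
  rw [Finset.sum_range_add (fun a => ∑ b ∈ range (N + N), g a b)]
  rw [show (∑ a ∈ range N, ∑ b ∈ range (N + N), g a b)
      = (∑ a ∈ range N, ((∑ b ∈ range N, g a b) + ∑ b ∈ range N, g a (N + b)))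
    from Finset.sum_congr rfl fun a _ => Finset.sum_range_add _ N N]
  rw [show (∑ a ∈ range N, ∑ b ∈ range (N + N), g (N + a) b)
      = (∑ a ∈ range N, ((∑ b ∈ range N, g (N + a) b) + ∑ b ∈ range N, g (N + a) (N + b)))
    from Finset.sum_congr rfl fun a _ => Finset.sum_range_add _ N N]
  rw [Finset.sum_add_distrib, Finset.sum_add_distrib]

lemma quad (ℓ m : ℕ) (M : Matrix (Fin (2 ^ ℓ * m)) (Fin (2 ^ ℓ * m)) ℝ)
    (k i j : ℕ) (hk : k < ℓ) :
    frobSq (blk ℓ m M k i j)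
      = (frobSq (blk ℓ m M (k + 1) (2 * i) (2 * j))
        + frobSq (blk ℓ m M (k + 1) (2 * i) (2 * j + 1)))
        + (frobSq (blk ℓ m M (k + 1) (2 * i + 1) (2 * j))
        + frobSq (blk ℓ m M (k + 1) (2 * i + 1) (2 * j + 1))) := by
  have h1 : ℓ - k = (ℓ - (k + 1)) + 1 := by omega
  set N := 2 ^ (ℓ - (k + 1)) * m with hN
  have h2 : 2 ^ (ℓ - k) * m = N + N := by rw [h1, hN]; ring
  rw [frobSq_blk, frobSq_blk, frobSq_blk, frobSq_blk, frobSq_blk, h2]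
  rw [split4 N (fun a b => (v ℓ m M (i * (N + N) + a) (j * (N + N) + b)) ^ 2)]
  congr 1
  · congr 1
    · exact Finset.sum_congr rfl fun a _ => Finset.sum_congr rfl fun b _ => by
        rw [show i * (N + N) + a = 2 * i * N + a by ring,
            show j * (N + N) + b = 2 * j * N + b by ring]
    · exact Finset.sum_congr rfl fun a _ => Finset.sum_congr rfl fun b _ => by
        rw [show i * (N + N) + a = 2 * i * N + a by ring,
            show j * (N + N) + (N + b) = (2 * j + 1) * N + b by ring]
  · congr 1
    · exact Finset.sum_congr rfl fun a _ => Finset.sum_congr rfl fun b _ => by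
        rw [show i * (N + N) + (N + a) = (2 * i + 1) * N + a by ring,
            show j * (N + N) + b = 2 * j * N + b by ring]
    · exact Finset.sum_congr rfl fun a _ => Finset.sum_congr rfl fun b _ => by
        rw [show i * (N + N) + (N + a) = (2 * i + 1) * N + a by ring,
            show j * (N + N) + (N + b) = (2 * j + 1) * N + b by ring]

lemma blk_sub (ℓ m : ℕ) (M M' : Matrix (Fin (2 ^ ℓ * m)) (Fin (2 ^ ℓ * m)) ℝ)
    (k i j : ℕ) :
    blk ℓ m (M - M') k i j = blk ℓ m M k i j - blk ℓ m M' k i j := by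
  ext a b
  simp only [blk, Matrix.of_apply, Matrix.sub_apply]
  split_ifs with h
  · rfl
  · simp


noncomputable def S (ℓ : ℕ) (ξ u : ℕ → ℝ) (k : ℕ) : ℝ :=
  ∑ j ∈ Finset.Icc (k + 1) ℓ, (2 : ℝ) ^ (j - k) * (ξ j * u j) ^ 2

lemma S_nonneg (ℓ : ℕ) (ξ u : ℕ → ℝ) (k : ℕ) : 0 ≤ S ℓ ξ u k :=
  Finset.sum_nonneg fun j _ => by positivity

lemma S_rec (ℓ : ℕ) (ξ u : ℕ → ℝ) (k : ℕ) (hk : k < ℓ) :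
    S ℓ ξ u k = 2 * (ξ (k + 1) * u (k + 1)) ^ 2 + 2 * S ℓ ξ u (k + 1) := by
  have hins : Finset.Icc (k + 1) ℓ = insert (k + 1) (Finset.Icc (k + 2) ℓ) := by
    ext x; simp only [Finset.mem_Icc, Finset.mem_insert]; omega
  have hnot : (k + 1) ∉ Finset.Icc (k + 2) ℓ := by simp
  rw [S, hins, Finset.sum_insert hnot]
  have h1 : (2:ℝ) ^ (k + 1 - k) * (ξ (k + 1) * u (k + 1)) ^ 2
      = 2 * (ξ (k + 1) * u (k + 1)) ^ 2 := by
    rw [show k + 1 - k = 1 from by omega]; norm_num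
  rw [h1]
  congr 1
  rw [S, Finset.mul_sum]
  refine Finset.sum_congr rfl fun j hj => ?_
  have hj' : k + 2 ≤ j := (Finset.mem_Icc.mp hj).1
  rw [show j - k = (j - (k + 1)) + 1 from by omega, pow_succ]
  ring

end HodlrAux


open HodlrAux in
/-- Local (per-diagonal-block) error of the adaptive mixed-precision HODLR
representation: each level-`ℓ'` diagonal block of `Ĥ` is within
`(2 + √p·u*)·√(2(ℓ−ℓ'))·ε·‖H̃‖_F` of the corresponding block of `H̃`, provided the
precisions `u_k` for levels `k ∈ {ℓ'+1,…,ℓ}` satisfy the adaptive rule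
`2^((k−ℓ')/2)·ξ_k·u_k ≤ ε`. -/
theorem hodlr_adaptive_precision_local_error (ℓ m : ℕ) (hℓ : 1 ≤ ℓ) (hm : 1 ≤ m)
    (l' : ℕ) (hl' : l' ≤ ℓ - 1)
    (p : ℝ) (hp : 0 ≤ p) (ε : ℝ) (hε : 0 ≤ ε) (ustar : ℝ) (hustar : 0 ≤ ustar)
    (Ht Hh : Matrix (Fin (2 ^ ℓ * m)) (Fin (2 ^ ℓ * m)) ℝ)
    (ξ u : ℕ → ℝ)
    (hξ : ∀ k, l' + 1 ≤ k → k ≤ ℓ → 0 ≤ ξ k)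
    (hu : ∀ k, l' + 1 ≤ k → k ≤ ℓ → 0 ≤ u k ∧ u k ≤ ustar)
    (hmag : ∀ k, l' + 1 ≤ k → k ≤ ℓ → ∀ t < 2 ^ (k - 1),
      frob (blk ℓ m Ht k (2 * t) (2 * t + 1)) ≤ ξ k * frob Ht ∧
      frob (blk ℓ m Ht k (2 * t + 1) (2 * t)) ≤ ξ k * frob Ht)
    (herr : ∀ k, l' + 1 ≤ k → k ≤ ℓ → ∀ t < 2 ^ (k - 1),
      frob (blk ℓ m Ht k (2 * t) (2 * t + 1) - blk ℓ m Hh k (2 * t) (2 * t + 1))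
        ≤ (2 + Real.sqrt p * u k) * u k * frob (blk ℓ m Ht k (2 * t) (2 * t + 1)) ∧
      frob (blk ℓ m Ht k (2 * t + 1) (2 * t) - blk ℓ m Hh k (2 * t + 1) (2 * t))
        ≤ (2 + Real.sqrt p * u k) * u k * frob (blk ℓ m Ht k (2 * t + 1) (2 * t)))
    (hdiag : ∀ i < 2 ^ ℓ, blk ℓ m Hh ℓ i i = blk ℓ m Ht ℓ i i)
    (hchoice : ∀ k, l' + 1 ≤ k → k ≤ ℓ →
      Real.sqrt ((2 : ℝ) ^ (k - l')) * ξ k * u k ≤ ε) :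
    ∀ i < 2 ^ l',
      frob (blk ℓ m Ht l' i i - blk ℓ m Hh l' i i)
        ≤ (2 + Real.sqrt p * ustar) * Real.sqrt (2 * ((ℓ - l' : ℕ) : ℝ)) * ε * frob Ht := by
  intro i hi
  have hl : l' < ℓ := by omega
  set c : ℝ := 2 + Real.sqrt p * ustar with hc
  have hc0 : 0 ≤ c := by
    have : 0 ≤ Real.sqrt p * ustar := mul_nonneg (Real.sqrt_nonneg p) hustar
    rw [hc]; linarith
  set B : ℝ := c ^ 2 * frobSq Ht with hB
  have hB0 : 0 ≤ B := mul_nonneg (sq_nonneg _) (frobSq_nonneg _)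
  have key : ∀ d, d ≤ ℓ - l' → ∀ i', i' < 2 ^ (ℓ - d) →
      frobSq (blk ℓ m (Ht - Hh) (ℓ - d) i' i') ≤ B * S ℓ ξ u (ℓ - d) := by
    intro d
    induction d with
    | zero =>
      intro _ i' hi'
      simp only [Nat.sub_zero] at hi' ⊢
      have h0 : blk ℓ m (Ht - Hh) ℓ i' i' = 0 := by
        rw [blk_sub, hdiag i' hi', sub_self]
      rw [h0, frobSq_zero]
      exact mul_nonneg hB0 (S_nonneg ℓ ξ u ℓ)
    | succ d ih =>
      intro hd i' hi'
      have hdl : d ≤ ℓ - l' := by omega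
      have hKlt : ℓ - (d + 1) < ℓ := by omega
      have hK1 : ℓ - (d + 1) + 1 = ℓ - d := by omega
      have hq := quad ℓ m (Ht - Hh) (ℓ - (d + 1)) i' i' hKlt
      rw [hK1] at hq
      set K := ℓ - d with hKdef
      have hK1' : l' + 1 ≤ K := by omega
      have hK2' : K ≤ ℓ := by omega
      obtain ⟨hu0, hu1⟩ := hu K hK1' hK2'
      have hξ0 := hξ K hK1' hK2'
      have hi'' : i' < 2 ^ (K - 1) := by
        have hKm : K - 1 = ℓ - (d + 1) := by omega
        rw [hKm]; exact hi'
      obtain ⟨hm1, hm2⟩ := hmag K hK1' hK2' i' hi''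
      obtain ⟨he1, he2⟩ := herr K hK1' hK2' i' hi''
      have hoff : ∀ a b : ℕ,
          frob (blk ℓ m Ht K a b - blk ℓ m Hh K a b)
            ≤ (2 + Real.sqrt p * u K) * u K * frob (blk ℓ m Ht K a b) →
          frob (blk ℓ m Ht K a b) ≤ ξ K * frob Ht →
          frobSq (blk ℓ m (Ht - Hh) K a b) ≤ B * (ξ K * u K) ^ 2 := by
        intro a b h1 h2
        have hnn : (0:ℝ) ≤ (2 + Real.sqrt p * u K) * u K := by
          have : 0 ≤ Real.sqrt p * u K := mul_nonneg (Real.sqrt_nonneg p) hu0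
          nlinarith
        have h3 : frob (blk ℓ m (Ht - Hh) K a b) ≤ c * (ξ K * u K) * frob Ht := by
          rw [blk_sub]
          calc frob (blk ℓ m Ht K a b - blk ℓ m Hh K a b)
              ≤ (2 + Real.sqrt p * u K) * u K * frob (blk ℓ m Ht K a b) := h1
            _ ≤ (2 + Real.sqrt p * u K) * u K * (ξ K * frob Ht) :=
                mul_le_mul_of_nonneg_left h2 hnn
            _ = (2 + Real.sqrt p * u K) * (u K * (ξ K * frob Ht)) := by ring
            _ ≤ c * (u K * (ξ K * frob Ht)) := by
                refine mul_le_mul_of_nonneg_right ?_ ?_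
                · rw [hc]
                  have := mul_le_mul_of_nonneg_left hu1 (Real.sqrt_nonneg p)
                  linarith
                · exact mul_nonneg hu0 (mul_nonneg hξ0 (frob_nonneg _))
            _ = c * (ξ K * u K) * frob Ht := by ring
        have h4 := pow_le_pow_left₀ (frob_nonneg _) h3 2
        rw [sq_frob] at h4
        calc frobSq (blk ℓ m (Ht - Hh) K a b)
            ≤ (c * (ξ K * u K) * frob Ht) ^ 2 := h4
          _ = B * (ξ K * u K) ^ 2 := by rw [hB, mul_pow, mul_pow, sq_frob]; ring
      have hpow : 2 ^ K = 2 * 2 ^ (ℓ - (d + 1)) := by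
        rw [hKdef, show ℓ - d = (ℓ - (d + 1)) + 1 from by omega]; ring
      have hd1 := ih hdl (2 * i') (by omega)
      have hd2 := ih hdl (2 * i' + 1) (by omega)
      have ho1 := hoff (2 * i') (2 * i' + 1) he1 hm1
      have ho2 := hoff (2 * i' + 1) (2 * i') he2 hm2
      rw [hq, S_rec ℓ ξ u (ℓ - (d + 1)) hKlt, hK1]
      linarith
  have hll : ℓ - (ℓ - l') = l' := by omega
  have hfin := key (ℓ - l') le_rfl i (by rw [hll]; exact hi)
  rw [hll] at hfin
  set L : ℝ := ((ℓ - l' : ℕ) : ℝ) with hL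
  have hL0 : (0:ℝ) ≤ L := by rw [hL]; exact Nat.cast_nonneg _
  have hSl : S ℓ ξ u l' ≤ L * ε ^ 2 := by
    have hcard : (Finset.Icc (l' + 1) ℓ).card = ℓ - l' := by
      rw [Nat.card_Icc]; omega
    have hbound : ∀ j ∈ Finset.Icc (l' + 1) ℓ,
        (2:ℝ) ^ (j - l') * (ξ j * u j) ^ 2 ≤ ε ^ 2 := by
      intro j hj
      obtain ⟨hj1, hj2⟩ := Finset.mem_Icc.mp hj
      have h1 := hchoice j hj1 hj2
      have hnn : 0 ≤ Real.sqrt ((2:ℝ) ^ (j - l')) * ξ j * u j :=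
        mul_nonneg (mul_nonneg (Real.sqrt_nonneg _) (hξ j hj1 hj2)) ((hu j hj1 hj2).1)
      have h2 := pow_le_pow_left₀ hnn h1 2
      calc (2:ℝ) ^ (j - l') * (ξ j * u j) ^ 2
          = (Real.sqrt ((2:ℝ) ^ (j - l')) * ξ j * u j) ^ 2 := by
            rw [show (Real.sqrt ((2:ℝ) ^ (j - l')) * ξ j * u j) ^ 2
                = (Real.sqrt ((2:ℝ) ^ (j - l'))) ^ 2 * (ξ j * u j) ^ 2 from by ring,
              Real.sq_sqrt (by positivity)]
        _ ≤ ε ^ 2 := h2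
    have h := Finset.sum_le_card_nsmul (Finset.Icc (l' + 1) ℓ)
      (fun j => (2:ℝ) ^ (j - l') * (ξ j * u j) ^ 2) (ε ^ 2) hbound
    rw [hcard, nsmul_eq_mul] at h
    rw [hL]
    exact h
  have hmain : frobSq (blk ℓ m (Ht - Hh) l' i i) ≤ B * (L * ε ^ 2) :=
    le_trans hfin (mul_le_mul_of_nonneg_left hSl hB0)
  have hRHS : (0:ℝ) ≤ c * Real.sqrt (2 * L) * ε * frob Ht :=
    mul_nonneg (mul_nonneg (mul_nonneg hc0 (Real.sqrt_nonneg _)) hε) (frob_nonneg _)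
  have hsq : frobSq (blk ℓ m (Ht - Hh) l' i i)
      ≤ (c * Real.sqrt (2 * L) * ε * frob Ht) ^ 2 := by
    have heq : (c * Real.sqrt (2 * L) * ε * frob Ht) ^ 2 = 2 * (B * (L * ε ^ 2)) := by
      rw [show (c * Real.sqrt (2 * L) * ε * frob Ht) ^ 2
          = (Real.sqrt (2 * L)) ^ 2 * (c ^ 2 * ε ^ 2 * frob Ht ^ 2) from by ring,
        Real.sq_sqrt (by linarith), sq_frob, hB]; ring
    have hnn2 : 0 ≤ B * (L * ε ^ 2) := mul_nonneg hB0 (by positivity)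
    linarith
  rw [← blk_sub]
  calc frob (blk ℓ m (Ht - Hh) l' i i)
      = Real.sqrt (frobSq (blk ℓ m (Ht - Hh) l' i i)) := rfl
    _ ≤ Real.sqrt ((c * Real.sqrt (2 * L) * ε * frob Ht) ^ 2) := Real.sqrt_le_sqrt hsq
    _ = c * Real.sqrt (2 * L) * ε * frob Ht := Real.sqrt_sq hRHS
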